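/- Let $g : \mathbb{R}^d \to \mathbb{R}$ be a concave upper semicontinuous function, $\Xi \subseteq \mathbb{R}^d$ a nonempty closed convex set, $\hat{\xi} \in \mathbb{R}^d$, $\theta \geq 0$, and $\|\cdot\|$ a norm on $\mathbb{R}^d$. Then $\sup_{\xi \in \Xi} \left[ g(\xi) - \theta \|\xi - \hat{\xi}\| \right] = \inf \left\{ [-g]^*(z - v) + S_\Xi(v) - \langle z, \hat{\xi} \rangle : z, v \in \mathbb{R}^d, \|z\|_* \leq \theta \right\}$, where $[-g]^*$ is the convex conjugate of $-g$, $S_\Xi(v) = \sup_{\xi \in \Xi} \langle v, \xi \rangle$ is the support function of $\Xi$, and $\|\cdot\|_*$ is the dual norm; assuming a suitable constraint qualification (e.g., $g$ is finite on a neighborhood of a point of $\Xi$) so that Fenchel duality holds. -/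

import Mathlib

open Set

/-!
Perturb the two arguments of `ξ ↦ g ξ - θ N (ξ - ξ̂)` independently: the strict hypograph of the
value function `(u, w) ↦ sup_{x ∈ Ξ} g (x + u) - θ N (x + w - ξ̂)` is open (as `g` and `N` are
continuous, being finite and concave resp. convex in finite dimension) and convex, and it misses
`(0, 0, s)` whenever `s` bounds the primal problem. A separating hyperplane cannot be vertical, since
the hypograph contains `(0, 0, t)` for small `t`; its slope `(a, b)` is a dual certificate.
The `w`-part of the certificate is bounded above in `w`, which by homogeneity of `N` forces
`z = -b` into the dual ball of radius `θ`, and `v = -(a + b)` is the multiplier of `Ξ`.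
Weak duality is the Fenchel–Young-type inequality `⟨z, ξ̂ - ξ⟩ ≤ θ N (ξ - ξ̂)`.
-/

section Separation

variable {F : Type*} [AddCommGroup F] [Module ℝ F] [TopologicalSpace F] [IsTopologicalAddGroup F]
  [ContinuousSMul ℝ F]

theorem Convex.exists_add_lt_of_notMem {S : Set (F × ℝ)} (hS : Convex ℝ S) (hS' : IsOpen S)
    {s t₀ : ℝ} (hs : ((0 : F), s) ∉ S) (ht₀ : ((0 : F), t₀) ∈ S) (ht₀s : t₀ < s) :
    ∃ φ : F →L[ℝ] ℝ, ∀ y t, (y, t) ∈ S → t + φ y < s := by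
  obtain ⟨f, hf⟩ := geometric_hahn_banach_open_point hS hS' hs
  have hf_apply : ∀ y t, f (y, t) = f (y, 0) + t * f (0, 1) := fun y t => by
    rw [← smul_eq_mul, ← map_smul, ← map_add]
    simp
  have hc : 0 < f (0, 1) := by
    have := hf _ ht₀
    rw [hf_apply, hf_apply 0 s] at this
    nlinarith
  refine ⟨(f (0, 1))⁻¹ • f.comp (ContinuousLinearMap.inl ℝ F ℝ), fun y t hyt => ?_⟩
  have := hf _ hyt
  rw [hf_apply, hf_apply 0 s, Prod.mk_zero_zero, map_zero, zero_add] at this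
  change t + (f (0, 1))⁻¹ * f (y, 0) < s
  rw [inv_mul_eq_div, ← lt_sub_iff_add_lt', div_lt_iff₀ hc]
  linarith

end Separation

def perturbedHypograph {E : Type*} [Add E] (g h : E → ℝ) (Ξ : Set E) : Set ((E × E) × ℝ) :=
  {p | ∃ x ∈ Ξ, p.2 < g (x + p.1.1) + h (x + p.1.2)}

section Perturbation

variable {E : Type*} [AddCommGroup E] {g h : E → ℝ} {Ξ : Set E}

lemma isOpen_perturbedHypograph [TopologicalSpace E] [ContinuousAdd E] (hg : Continuous g)
    (hh : Continuous h) : IsOpen (perturbedHypograph g h Ξ) := by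
  have : perturbedHypograph g h Ξ = ⋃ x ∈ Ξ, {p | p.2 < g (x + p.1.1) + h (x + p.1.2)} := by
    ext
    simp [perturbedHypograph]
  rw [this]
  exact isOpen_biUnion fun x _ => isOpen_lt continuous_snd (by fun_prop)

lemma convex_perturbedHypograph [Module ℝ E] (hg : ConcaveOn ℝ univ g) (hh : ConcaveOn ℝ univ h)
    (hΞ : Convex ℝ Ξ) : Convex ℝ (perturbedHypograph g h Ξ) := by
  let G : E × E × E → ℝ := fun q => g (q.1 + q.2.1) + h (q.1 + q.2.2)
  have hG : ConcaveOn ℝ (Ξ ×ˢ univ) G := by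
    have hg' := hg.comp_linearMap
      (LinearMap.fst ℝ E (E × E) + LinearMap.fst ℝ E E ∘ₗ LinearMap.snd ℝ E (E × E))
    have hh' := hh.comp_linearMap
      (LinearMap.fst ℝ E (E × E) + LinearMap.snd ℝ E E ∘ₗ LinearMap.snd ℝ E (E × E))
    exact (hg'.add hh').subset (subset_univ _) (hΞ.prod convex_univ)
  let π : (E × E × E) × ℝ →ₗ[ℝ] (E × E) × ℝ := (LinearMap.snd ℝ E (E × E)).prodMap LinearMap.id
  have : perturbedHypograph g h Ξ = π '' {q | q.1 ∈ Ξ ×ˢ univ ∧ q.2 < G q.1} := by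
    ext ⟨⟨u, w⟩, t⟩
    simp [perturbedHypograph, π, G]
  rw [this]
  exact hG.convex_strict_hypograph.linear_image π

theorem exists_dual_certificate [Module ℝ E] [TopologicalSpace E] [IsTopologicalAddGroup E]
    [ContinuousSMul ℝ E] (hg : ConcaveOn ℝ univ g) (hh : ConcaveOn ℝ univ h)
    (hg' : Continuous g) (hh' : Continuous h) (hΞ : Convex ℝ Ξ) (hΞ' : Ξ.Nonempty) {s : ℝ}
    (hs : ∀ x ∈ Ξ, g x + h x ≤ s) :
    ∃ a b : E →L[ℝ] ℝ, ∀ x ∈ Ξ, ∀ p q, g p + h q + a (p - x) + b (q - x) ≤ s := by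
  obtain ⟨x₀, hx₀⟩ := hΞ'
  have hmiss : ((0 : E × E), s) ∉ perturbedHypograph g h Ξ := by
    rintro ⟨x, hx, hlt⟩
    simp only [Prod.fst_zero, Prod.snd_zero, add_zero] at hlt
    linarith [hs x hx]
  have hmem : ((0 : E × E), g x₀ + h x₀ - 1) ∈ perturbedHypograph g h Ξ :=
    ⟨x₀, hx₀, by simp⟩
  obtain ⟨φ, hφ⟩ := (convex_perturbedHypograph hg hh hΞ).exists_add_lt_of_notMem
    (isOpen_perturbedHypograph hg' hh') hmiss hmem (by linarith [hs x₀ hx₀])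
  refine ⟨φ.comp (.inl ℝ E E), φ.comp (.inr ℝ E E), fun x hx p q => ?_⟩
  have hpq : g p + h q + φ (p - x, q - x) ≤ s := by
    refine le_of_forall_lt fun t ht => ?_
    have := hφ (p - x, q - x) (t - φ (p - x, q - x)) ⟨x, hx, by simp; linarith⟩
    linarith
  have hsplit : φ (p - x, q - x) = φ (p - x, 0) + φ (0, q - x) := by rw [← map_add]; simp
  simpa [hsplit, add_assoc] using hpq

end Perturbation

section FiniteDimensional

variable {E : Type*} [NormedAddCommGroup E] [NormedSpace ℝ E] [FiniteDimensional ℝ E]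

lemma Seminorm.continuous_of_finiteDimensional (p : Seminorm ℝ E) : Continuous p :=
  continuousOn_univ.1 (p.convexOn.continuousOn isOpen_univ)

lemma Seminorm.exists_pos_mul_norm_le (p : Seminorm ℝ E) (hp : ∀ x, p x = 0 → x = 0) :
    ∃ m > 0, ∀ x, m * ‖x‖ ≤ p x := by
  rcases subsingleton_or_nontrivial E with hE | hE
  · exact ⟨1, one_pos, fun x => by simp [Subsingleton.elim x 0]⟩
  obtain ⟨x₀, hx₀, hmin⟩ := (isCompact_sphere (0 : E) 1).exists_isMinOn
    (NormedSpace.sphere_nonempty.2 zero_le_one) p.continuous_of_finiteDimensional.continuousOn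
  have hx₀0 : x₀ ≠ 0 := ne_zero_of_mem_unit_sphere ⟨x₀, hx₀⟩
  refine ⟨p x₀, (apply_nonneg p x₀).lt_of_ne' (mt (hp x₀) hx₀0), fun x => ?_⟩
  rcases eq_or_ne x 0 with rfl | hx
  · simp
  have hnx : 0 < ‖x‖ := norm_pos_iff.2 hx
  have : p x₀ ≤ p (‖x‖⁻¹ • x) := hmin (by simp [norm_smul, hnx.ne'])
  rwa [map_smul_eq_mul, norm_inv, norm_norm, inv_mul_eq_div, le_div_iff₀ hnx] at this

lemma Seminorm.isCompact_setOf_le (p : Seminorm ℝ E) (hp : ∀ x, p x = 0 → x = 0) (r : ℝ) :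
    IsCompact {x | p x ≤ r} := by
  obtain ⟨m, hm, hle⟩ := p.exists_pos_mul_norm_le hp
  refine Metric.isCompact_of_isClosed_isBounded
    (isClosed_le p.continuous_of_finiteDimensional continuous_const) ?_
  refine (Metric.isBounded_closedBall (x := (0 : E)) (r := r / m)).subset fun x hx => ?_
  rw [mem_closedBall_zero_iff, le_div_iff₀' hm]
  exact (hle x).trans hx

end FiniteDimensional

lemma le_mul_seminorm_of_forall_sub_le {E : Type*} [AddCommGroup E] [Module ℝ E]
    (L : E →ₗ[ℝ] ℝ) (p : Seminorm ℝ E) {θ D : ℝ} (h : ∀ w, L w - θ * p w ≤ D) (w : E) :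
    L w ≤ θ * p w := by
  by_contra! hw
  have he : 0 < L w - θ * p w := by linarith
  have := h (((|D| + 1) / (L w - θ * p w)) • w)
  rw [map_smul, map_smul_eq_mul, Real.norm_of_nonneg (by positivity), smul_eq_mul,
    mul_left_comm, ← mul_sub, div_mul_cancel₀ _ he.ne'] at this
  linarith [le_abs_self D]

section DotProduct

variable {ι : Type*} [Fintype ι]

lemma exists_dotProduct_eq (L : (ι → ℝ) →ₗ[ℝ] ℝ) : ∃ a : ι → ℝ, ∀ w, a ⬝ᵥ w = L w := by
  classical
  exact ⟨(dotProductEquiv ℝ ι).symm L, fun w => by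
    rw [← dotProductEquiv_apply_apply, LinearEquiv.apply_symm_apply]⟩

lemma sSup_dotProduct_le_iff (p : Seminorm ℝ (ι → ℝ)) (hp : ∀ x, p x = 0 → x = 0) {θ : ℝ}
    (hθ : 0 ≤ θ) (z : ι → ℝ) :
    sSup {r | ∃ v, p v ≤ 1 ∧ r = z ⬝ᵥ v} ≤ θ ↔ ∀ w, z ⬝ᵥ w ≤ θ * p w := by
  constructor
  · intro h w
    obtain ⟨C, hC⟩ := (p.isCompact_setOf_le hp 1).bddAbove_image
      (f := (z ⬝ᵥ ·)) (by fun_prop)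
    have hbdd : BddAbove {r | ∃ v, p v ≤ 1 ∧ r = z ⬝ᵥ v} :=
      ⟨C, by rintro _ ⟨v, hv, rfl⟩; exact hC ⟨v, hv, rfl⟩⟩
    rcases (apply_nonneg p w).eq_or_lt with hw | hw
    · simp [hp w hw.symm]
    have hunit : p ((p w)⁻¹ • w) ≤ 1 := by
      rw [map_smul_eq_mul, Real.norm_of_nonneg (inv_nonneg.2 hw.le), inv_mul_cancel₀ hw.ne']
    have := (le_csSup hbdd ⟨_, hunit, rfl⟩).trans h
    rwa [dotProduct_smul, smul_eq_mul, inv_mul_le_iff₀ hw, mul_comm] at this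
  · intro h
    refine csSup_le ⟨0, 0, by simp, by simp⟩ ?_
    rintro r ⟨v, hv, rfl⟩
    exact (h v).trans (by nlinarith)

theorem exists_dual_pair_of_forall_le {g : (ι → ℝ) → ℝ} (hg : ConcaveOn ℝ univ g)
    {Ξ : Set (ι → ℝ)} (hΞ : Convex ℝ Ξ) (hΞ' : Ξ.Nonempty) (p : Seminorm ℝ (ι → ℝ)) {θ : ℝ}
    (hθ : 0 ≤ θ) (ξ₀ : ι → ℝ) {s : ℝ} (hs : ∀ ξ ∈ Ξ, g ξ - θ * p (ξ - ξ₀) ≤ s) :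
    ∃ z v : ι → ℝ, (∀ w, z ⬝ᵥ w ≤ θ * p w) ∧
      ∀ x, ∀ ξ ∈ Ξ, (z - v) ⬝ᵥ x + g x + v ⬝ᵥ ξ ≤ s + z ⬝ᵥ ξ₀ := by
  set h : (ι → ℝ) → ℝ := fun q => -(θ * p (q - ξ₀))
  have hh : ConcaveOn ℝ univ h :=
    ((p.convexOn.translate_right (-ξ₀)).smul hθ).neg.congr fun q _ => by simp [h, neg_add_eq_sub]
  have hh' : Continuous h := by
    have := p.continuous_of_finiteDimensional
    fun_prop
  obtain ⟨a, b, hab⟩ := exists_dual_certificate hg hh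
    (continuousOn_univ.1 (hg.continuousOn isOpen_univ)) hh' hΞ hΞ' (s := s)
    (by simpa [h, ← sub_eq_add_neg] using hs)
  obtain ⟨a', ha'⟩ := exists_dotProduct_eq a.toLinearMap
  obtain ⟨b', hb'⟩ := exists_dotProduct_eq b.toLinearMap
  obtain ⟨x₀, hx₀⟩ := hΞ'
  refine ⟨-b', -(a' + b'), fun w => ?_, fun x ξ hξ => ?_⟩
  · have hb_le : ∀ w, b w - θ * p w ≤ s - g x₀ - b (ξ₀ - x₀) := fun w => by
      have := hab x₀ hx₀ x₀ (ξ₀ + w)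
      simp only [h, add_sub_cancel_left, sub_self, map_zero, add_zero, map_add, map_sub] at this
      simp only [map_sub]
      linarith
    have := le_mul_seminorm_of_forall_sub_le b.toLinearMap p hb_le (-w)
    simpa [neg_dotProduct, hb'] using this
  · have := hab ξ hξ x ξ₀
    simp only [h, sub_self, map_zero, mul_zero, neg_zero, add_zero, map_sub] at this
    simp only [sub_dotProduct, neg_dotProduct, add_dotProduct, ha', hb',
      ContinuousLinearMap.coe_coe]
    linarith

end DotProduct

lemma EReal.iSup_add_iSup_le {α β : Sort*} {f : α → EReal} {g : β → EReal} {c : EReal}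
    (h : ∀ a b, f a + g b ≤ c) : (⨆ a, f a) + (⨆ b, g b) ≤ c :=
  EReal.add_le_of_forall_lt fun _ ha _ hb => by
    obtain ⟨a, ha⟩ := lt_iSup_iff.1 ha
    obtain ⟨b, hb⟩ := lt_iSup_iff.1 hb
    exact (add_le_add ha.le hb.le).trans (h a b)

theorem robust_counterpart_fenchel_duality_general
    (d : ℕ) (g : (Fin d → ℝ) → ℝ)
    (hg_concave : ConcaveOn ℝ Set.univ g)
    (Xi : Set (Fin d → ℝ)) (hXi_ne : Xi.Nonempty)
    (hXi_convex : Convex ℝ Xi)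
    (ξhat : Fin d → ℝ) (θ : ℝ) (hθ : 0 ≤ θ)
    (N : (Fin d → ℝ) → ℝ)
    (hN_add : ∀ x y, N (x + y) ≤ N x + N y)
    (hN_smul : ∀ (c : ℝ) x, N (c • x) = |c| * N x)
    (hN_zero : ∀ x, N x = 0 ↔ x = 0)
    (dualN : (Fin d → ℝ) → ℝ)
    (hdual : ∀ s, dualN s = sSup {r : ℝ | ∃ v, N v ≤ 1 ∧ r = ∑ i, s i * v i}) :
    (⨆ ξ ∈ Xi, ((g ξ - θ * N (ξ - ξhat) : ℝ) : EReal))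
      = ⨅ (z : {z : Fin d → ℝ // dualN z ≤ θ}) (v : Fin d → ℝ),
          ((⨆ x : Fin d → ℝ, (((∑ i, (z.1 i - v i) * x i) + g x : ℝ) : EReal))
            + (⨆ ξ ∈ Xi, ((∑ i, v i * ξ i : ℝ) : EReal))
            - ((∑ i, z.1 i * ξhat i : ℝ) : EReal)) := by
  let p : Seminorm ℝ (Fin d → ℝ) := .of N hN_add fun c x => by rw [Real.norm_eq_abs, hN_smul]
  have hdual_le : ∀ z, dualN z ≤ θ ↔ ∀ w, z ⬝ᵥ w ≤ θ * N w := fun z => by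
    rw [hdual]
    exact sSup_dotProduct_le_iff p (fun x => (hN_zero x).1) hθ z
  apply le_antisymm
  · refine le_iInf fun z => le_iInf fun v => iSup₂_le fun ξ hξ => ?_
    have hz := (hdual_le z).1 z.2 (ξhat - ξ)
    have hN_symm : N (ξhat - ξ) = N (ξ - ξhat) := by
      rw [← neg_sub]
      exact map_neg_eq_map p _
    calc ((g ξ - θ * N (ξ - ξhat) : ℝ) : EReal)
        ≤ (((z.1 - v) ⬝ᵥ ξ + g ξ : ℝ) : EReal) + ((v ⬝ᵥ ξ : ℝ) : EReal)
          - ((z.1 ⬝ᵥ ξhat : ℝ) : EReal) := by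
          rw [← EReal.coe_add, ← EReal.coe_sub, EReal.coe_le_coe_iff]
          simp only [dotProduct_sub, sub_dotProduct, hN_symm] at hz ⊢
          linarith
      _ ≤ _ := EReal.sub_le_sub (add_le_add
          (le_iSup (fun x => (((z.1 - v) ⬝ᵥ x + g x : ℝ) : EReal)) ξ)
          (le_iSup₂ (f := fun ξ _ => ((v ⬝ᵥ ξ : ℝ) : EReal)) ξ hξ)) le_rfl
  · refine EReal.le_of_forall_lt_iff_le.1 fun s hs => ?_
    have hle : ∀ ξ ∈ Xi, g ξ - θ * p (ξ - ξhat) ≤ s := fun ξ hξ => EReal.coe_le_coe_iff.1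
      ((le_iSup₂ (f := fun ξ _ => ((g ξ - θ * N (ξ - ξhat) : ℝ) : EReal)) ξ hξ).trans hs.le)
    obtain ⟨z, v, hz, hzv⟩ :=
      exists_dual_pair_of_forall_le hg_concave hXi_convex hXi_ne p hθ ξhat hle
    refine (iInf₂_le ⟨z, (hdual_le z).2 hz⟩ v).trans (EReal.sub_le_of_le_add ?_)
    simp only [iSup_subtype']
    exact EReal.iSup_add_iSup_le fun x ξ => by exact_mod_cast hzv x ξ ξ.2

/-- Fenchel-duality reformulation of the inner maximization
`sup_{ξ ∈ Ξ} [g(ξ) - θ ‖ξ - ξ̂‖]` in terms of the conjugate of `-g`, the support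
function of `Ξ`, and the dual-norm constraint `‖z‖_* ≤ θ`. -/
theorem robust_counterpart_fenchel_duality
    (d : ℕ) (g : (Fin d → ℝ) → ℝ)
    (hg_concave : ConcaveOn ℝ Set.univ g)
    (hg_usc : UpperSemicontinuous g)
    (Xi : Set (Fin d → ℝ)) (hXi_ne : Xi.Nonempty)
    (hXi_closed : IsClosed Xi) (hXi_convex : Convex ℝ Xi)
    (ξhat : Fin d → ℝ) (θ : ℝ) (hθ : 0 ≤ θ)
    (N : (Fin d → ℝ) → ℝ)
    (hN_add : ∀ x y, N (x + y) ≤ N x + N y)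
    (hN_smul : ∀ (c : ℝ) x, N (c • x) = |c| * N x)
    (hN_zero : ∀ x, N x = 0 ↔ x = 0)
    (dualN : (Fin d → ℝ) → ℝ)
    (hdual : ∀ s, dualN s = sSup {r : ℝ | ∃ v, N v ≤ 1 ∧ r = ∑ i, s i * v i}) :
    (⨆ ξ ∈ Xi, ((g ξ - θ * N (ξ - ξhat) : ℝ) : EReal))
      = ⨅ (z : {z : Fin d → ℝ // dualN z ≤ θ}) (v : Fin d → ℝ),
          ((⨆ x : Fin d → ℝ, (((∑ i, (z.1 i - v i) * x i) + g x : ℝ) : EReal))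
            + (⨆ ξ ∈ Xi, ((∑ i, v i * ξ i : ℝ) : EReal))
            - ((∑ i, z.1 i * ξhat i : ℝ) : EReal)) :=
  robust_counterpart_fenchel_duality_general d g hg_concave Xi hXi_ne hXi_convex ξhat θ hθ N hN_add
    hN_smul hN_zero dualN hdual
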